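/- In the positive braid monoid B_n⁺, left-divisibility (a ≼ b iff there exists c ∈ B_n⁺ with a·c = b) is a partial order, and the interval [1, Δ] = {β ∈ B_n⁺ : β ≼ Δ}, where Δ = (σ_1)(σ_2σ_1)(σ_3σ_2σ_1)⋯(σ_{n−1}⋯σ_2σ_1) is the half twist, is a lattice for ≼: any two elements of [1, Δ] have a greatest lower bound and a least upper bound within [1, Δ]. -/

import Mathlib

/-- The alternating word `i j i j ⋯` with `m` factors, in the free monoid. -/
def altWordM {α : Type*} (i j : α) : ℕ → FreeMonoid α
  | 0 => 1
  | m + 1 => FreeMonoid.of i * altWordM j i m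

/-- The braid relations associated to a Coxeter matrix, as relations on the free monoid. -/
inductive artinRelsM {B : Type*} (M : CoxeterMatrix B) :
    FreeMonoid B → FreeMonoid B → Prop
  | braid (i j : B) : M i j ≠ 0 →
      artinRelsM M (altWordM i j (M i j)) (altWordM j i (M i j))

/-- The Artin–Tits monoid of a Coxeter matrix. -/
abbrev ArtinTitsMonoid {B : Type*} (M : CoxeterMatrix B) := PresentedMonoid (artinRelsM M)

/-- The standard generators of the Artin–Tits monoid. -/
def artinσM {B : Type*} (M : CoxeterMatrix B) (i : B) : ArtinTitsMonoid M :=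
  PresentedMonoid.of (artinRelsM M) i

/-- The positive braid monoid `Bₙ⁺`, presented with generators `σ_1, …, σ_{n-1}`
(indexed by `Fin (n-1)`) and the braid relations. -/
abbrev BraidMonoid (n : ℕ) := ArtinTitsMonoid (CoxeterMatrix.Aₙ (n - 1))

/-- The standard generator `σ_{i+1}` of the positive braid monoid, for `i : Fin (n-1)`. -/
def braidσM (n : ℕ) (i : Fin (n - 1)) : BraidMonoid n := artinσM _ i

/-- The half twist `Δ = (σ₁)(σ₂σ₁)(σ₃σ₂σ₁)⋯(σ_{n-1}⋯σ₂σ₁)` in the positive braid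
monoid. -/
def braidDelta (n : ℕ) : BraidMonoid n :=
  (List.ofFn fun k : Fin (n - 1) =>
    (List.ofFn fun l : Fin ((k : ℕ) + 1) =>
      braidσM n ⟨(k : ℕ) - (l : ℕ), lt_of_le_of_lt (Nat.sub_le _ _) k.isLt⟩).prod).prod

/-- Left-divisibility in a monoid: `a ≼ b` iff `b = a·c` for some `c`. -/
def leftDvd {M : Type*} [Monoid M] (a b : M) : Prop := ∃ c, a * c = b

/-!
Garside's argument. The braid relations are complemented: for generators `a ≠ b` there is
exactly one relation `a · (a \ b) = b · (b \ a)`, where `a \ b` is `b` or `b a`. Garside's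
lemma: `a u = b v` forces `u = (a \ b) w` and `v = (b \ a) w` for some `w`. For words it is
proved by induction on the length and then on the number of relations leading from `a u` to
`b v`; when the first relation acts at the front, turning `a u` into `c u'`, the induction
hypothesis on shorter words yields the cube condition for `a`, `b`, `c`, checked case by case
on how the three generators sit. The lemma gives left cancellation and, by induction on the
length of a common multiple, a least common multiple of any two elements with a common
multiple, e.g. two divisors of `Δ`. A common divisor of maximal length is the greatest one,
since its lcm with any other common divisor is again a common divisor.
-/

section LeftDivisibility

variable {M : Type*} [Monoid M]

lemma leftDvd_iff_dvd {a b : M} : leftDvd a b ↔ a ∣ b := exists_congr fun _ => eq_comm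

lemma mul_dvd_mul_iff_left_of_isLeftCancelMul [IsLeftCancelMul M] {p x y : M} :
    p * x ∣ p * y ↔ x ∣ y :=
  ⟨fun ⟨c, hc⟩ => ⟨c, mul_left_cancel (by rw [hc, mul_assoc])⟩, mul_dvd_mul_left p⟩

/-- `m` is a least common right multiple of `x` and `y` (divisibility `∣` in a monoid is
left divisibility). -/
def IsLCM (x y m : M) : Prop := x ∣ m ∧ y ∣ m ∧ ∀ z, x ∣ z → y ∣ z → m ∣ z

lemma IsLCM.symm {x y m : M} (h : IsLCM x y m) : IsLCM y x m :=
  ⟨h.2.1, h.1, fun z hy hx => h.2.2 z hx hy⟩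

lemma isLCM_one_left (y : M) : IsLCM 1 y y :=
  ⟨one_dvd y, dvd_rfl, fun _ _ h => h⟩

variable [IsLeftCancelMul M] {p q y b m z : M}

lemma IsLCM.exists_eq_mul (hp : IsLCM p y (p * b)) (hq : p * q ∣ z) (hy : y ∣ z) :
    ∃ z', z = p * z' ∧ q ∣ z' ∧ b ∣ z' := by
  obtain ⟨z', rfl⟩ := (dvd_mul_right p q).trans hq
  exact ⟨z', rfl, mul_dvd_mul_iff_left_of_isLeftCancelMul.1 hq,
    mul_dvd_mul_iff_left_of_isLeftCancelMul.1 (hp.2.2 _ (dvd_mul_right p z') hy)⟩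

lemma IsLCM.mul (hp : IsLCM p y (p * b)) (hq : IsLCM q b m) : IsLCM (p * q) y (p * m) := by
  refine ⟨mul_dvd_mul_left p hq.1, hp.2.1.trans (mul_dvd_mul_left p hq.2.1), fun z hpq hy => ?_⟩
  obtain ⟨z', rfl, hqz, hbz⟩ := hp.exists_eq_mul hpq hy
  exact mul_dvd_mul_left p (hq.2.2 z' hqz hbz)

end LeftDivisibility

namespace PositiveBraid

variable {N : ℕ}

def Adjacent (a b : Fin N) : Prop := (a : ℕ) + 1 = b ∨ (b : ℕ) + 1 = a

def Distant (a b : Fin N) : Prop := a ≠ b ∧ ¬Adjacent a b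

instance : DecidableRel (Adjacent (N := N)) := fun _ _ => by unfold Adjacent; infer_instance

lemma Adjacent.symm {a b : Fin N} (h : Adjacent a b) : Adjacent b a := h.elim .inr .inl

lemma Adjacent.ne {a b : Fin N} (h : Adjacent a b) : a ≠ b := by
  rintro rfl; rcases h with h | h <;> omega

lemma Distant.symm {a b : Fin N} (h : Distant a b) : Distant b a :=
  ⟨h.1.symm, fun h' => h.2 h'.symm⟩

lemma adjacent_or_distant {a b : Fin N} (h : a ≠ b) : Adjacent a b ∨ Distant a b :=
  or_iff_not_imp_left.2 fun h' => ⟨h, h'⟩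

lemma not_adjacent_of_adjacent_of_adjacent {a b c : Fin N} (hab : Adjacent a b)
    (hbc : Adjacent b c) : ¬Adjacent a c := by
  rcases hab with h | h <;> rcases hbc with h' | h' <;> rintro (h'' | h'') <;> omega

/-- `σ_a · complement a b = σ_b · complement b a` is the least common right multiple of
`σ_a` and `σ_b`, and these are exactly the defining relations. -/
def complement (a b : Fin N) : List (Fin N) :=
  if a = b then [] else if Adjacent a b then [b, a] else [b]

@[simp] lemma complement_self (a : Fin N) : complement a a = [] := by simp [complement]

lemma complement_of_adjacent {a b : Fin N} (h : Adjacent a b) : complement a b = [b, a] := by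
  simp [complement, h, h.ne]

lemma complement_of_distant {a b : Fin N} (h : Distant a b) : complement a b = [b] := by
  simp [complement, h.1, h.2]

lemma length_complement_comm (a b : Fin N) :
    (complement a b).length = (complement b a).length := by
  rcases eq_or_ne a b with rfl | h
  · rfl
  rcases adjacent_or_distant h with h | h
  · simp [complement_of_adjacent h, complement_of_adjacent h.symm]
  · simp [complement_of_distant h, complement_of_distant h.symm]

inductive Step : List (Fin N) → List (Fin N) → Prop
  | rel (x y : List (Fin N)) {a b : Fin N} (h : a ≠ b) :
      Step (x ++ a :: complement a b ++ y) (x ++ b :: complement b a ++ y)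

abbrev BraidEquiv : List (Fin N) → List (Fin N) → Prop := Relation.ReflTransGen Step

local infix:50 " ≋ " => BraidEquiv

namespace Step

lemma symm {u v : List (Fin N)} (h : Step u v) : Step v u := by
  obtain ⟨x, y, h⟩ := h
  exact .rel x y h.symm

instance : Std.Symm (Step (N := N)) := ⟨fun _ _ => symm⟩

lemma append {u v : List (Fin N)} (h : Step u v) (x y : List (Fin N)) :
    Step (x ++ u ++ y) (x ++ v ++ y) := by
  obtain ⟨x', y', h⟩ := h
  simpa using Step.rel (x ++ x') (y' ++ y) h

lemma length_eq {u v : List (Fin N)} (h : Step u v) : u.length = v.length := by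
  obtain ⟨x, y, h⟩ := h
  simp [length_complement_comm]

lemma cons_cases {a : Fin N} {u z : List (Fin N)} (h : Step (a :: u) z) :
    (∃ u', z = a :: u' ∧ Step u u') ∨
      ∃ c y, a ≠ c ∧ u = complement a c ++ y ∧ z = c :: complement c a ++ y := by
  generalize hau : a :: u = au at h
  obtain ⟨_ | ⟨d, x⟩, y, h⟩ := h
  · obtain ⟨rfl, rfl⟩ := List.cons.inj hau
    exact .inr ⟨_, y, h, rfl, rfl⟩
  · obtain ⟨rfl, rfl⟩ := List.cons.inj hau
    exact .inl ⟨_, rfl, .rel x y h⟩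

end Step

@[refl] lemma BraidEquiv.refl {u : List (Fin N)} : u ≋ u := Relation.ReflTransGen.refl

lemma BraidEquiv.symm {u v : List (Fin N)} (h : u ≋ v) : v ≋ u := _root_.symm h

lemma BraidEquiv.length_eq {u v : List (Fin N)} (h : u ≋ v) : u.length = v.length := by
  induction h with
  | refl => rfl
  | tail _ h ih => exact ih.trans h.length_eq

lemma BraidEquiv.append {u u' v v' : List (Fin N)} (hu : u ≋ u') (hv : v ≋ v') :
    u ++ v ≋ u' ++ v' := by
  have hl : u ++ v ≋ u' ++ v := hu.lift (· ++ v) fun _ _ h => by simpa using h.append [] v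
  exact hl.trans (hv.lift (u' ++ ·) fun _ _ h => by simpa using h.append u' [])

lemma BraidEquiv.cons (a : Fin N) {u v : List (Fin N)} (h : u ≋ v) : a :: u ≋ a :: v :=
  BraidEquiv.append (u := [a]) .refl h

lemma swap {a b : Fin N} (h : Distant a b) (t : List (Fin N)) : a :: b :: t ≋ b :: a :: t := by
  have := Step.rel [] t h.1
  rw [complement_of_distant h, complement_of_distant h.symm] at this
  exact .single this

lemma braid {a b : Fin N} (h : Adjacent a b) (t : List (Fin N)) :
    a :: b :: a :: t ≋ b :: a :: b :: t := by
  have := Step.rel [] t h.ne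
  rw [complement_of_adjacent h, complement_of_adjacent h.symm] at this
  exact .single this


def ComplementBelow (N n : ℕ) : Prop :=
  ∀ (u v : List (Fin N)) (a b : Fin N), u.length < n → a :: u ≋ b :: v →
    ∃ w, u ≋ complement a b ++ w ∧ v ≋ complement b a ++ w

namespace ComplementBelow

variable {n : ℕ} {a b c : Fin N} {u v y w₁ : List (Fin N)}

lemma cancel (H : ComplementBelow N n) (hu : u.length < n) (h : a :: u ≋ a :: v) : u ≋ v := by
  obtain ⟨w, hu, hv⟩ := H u v a a hu h
  simp only [complement_self, List.nil_append] at hu hv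
  exact hu.trans hv.symm

lemma cancel_append (H : ComplementBelow N n) {p : List (Fin N)} (hu : (p ++ u).length ≤ n)
    (h : p ++ u ≋ p ++ v) : u ≋ v := by
  induction p with
  | nil => exact h
  | cons a p ih =>
    simp only [List.length_cons, List.length_append] at hu ih
    exact ih (by omega) (H.cancel (by simp; omega) h)

lemma of_distant (H : ComplementBelow N n) (hab : Distant a b) (hu : u.length < n)
    (h : a :: u ≋ b :: v) : ∃ w, u ≋ b :: w ∧ v ≋ a :: w := by
  simpa [complement_of_distant hab, complement_of_distant hab.symm] using H u v a b hu h

lemma of_adjacent (H : ComplementBelow N n) (hab : Adjacent a b) (hu : u.length < n)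
    (h : a :: u ≋ b :: v) : ∃ w, u ≋ b :: a :: w ∧ v ≋ a :: b :: w := by
  simpa [complement_of_adjacent hab, complement_of_adjacent hab.symm] using H u v a b hu h

end ComplementBelow

lemma mem_complement {a b x : Fin N} (h : x ∈ complement a b) : x = a ∨ x = b := by
  unfold complement at h
  split_ifs at h <;> simp at h <;> tauto

lemma cons_append_braidEquiv_append_cons {c : Fin N} {p : List (Fin N)}
    (hp : ∀ x ∈ p, Distant c x) (w : List (Fin N)) : c :: p ++ w ≋ p ++ c :: w := by
  induction p with
  | nil => exact .refl
  | cons x p ih =>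
    simp only [List.mem_cons, forall_eq_or_imp] at hp
    exact (swap hp.1 _).trans ((ih hp.2).cons x)

section Cube

variable {n : ℕ} {a b c : Fin N} {y w₁ : List (Fin N)}

lemma cube_of_distant_of_distant (H : ComplementBelow N n) (hac : Distant a c)
    (hbc : Distant b c) (hlen : (complement c a ++ y).length ≤ n)
    (h : complement c a ++ y ≋ complement c b ++ w₁) :
    ∃ w, complement a c ++ y ≋ complement a b ++ w ∧
      complement b c ++ w₁ ≋ complement b a ++ w := by
  simp only [complement_of_distant, hac, hac.symm, hbc, hbc.symm, List.cons_append,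
    List.nil_append, List.length_cons] at h hlen ⊢
  obtain ⟨w, hy, hw₁⟩ := H y w₁ a b (by omega) h
  have hc : ∀ {a b}, Distant a c → Distant b c → ∀ x ∈ complement a b, Distant c x :=
    fun ha hb x hx => (mem_complement hx).elim (· ▸ ha.symm) (· ▸ hb.symm)
  exact ⟨c :: w, (hy.cons c).trans (cons_append_braidEquiv_append_cons (hc hac hbc) w),
    (hw₁.cons c).trans (cons_append_braidEquiv_append_cons (hc hbc hac) w)⟩

lemma cube_of_distant_of_adjacent_of_distant (H : ComplementBelow N n) (hab : Distant a b)
    (hbc : Adjacent b c) (hac : Distant a c) (hlen : (complement c a ++ y).length ≤ n)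
    (h : complement c a ++ y ≋ complement c b ++ w₁) :
    ∃ w, complement a c ++ y ≋ complement a b ++ w ∧
      complement b c ++ w₁ ≋ complement b a ++ w := by
  simp only [complement_of_distant, complement_of_adjacent, hab, hab.symm, hac, hac.symm, hbc,
    hbc.symm, List.cons_append, List.nil_append, List.length_cons] at h hlen ⊢
  have hl₁ : y.length = w₁.length + 1 := by simpa using h.length_eq
  obtain ⟨w₂, hy, hcw₁⟩ := H.of_distant hab (by omega) h
  obtain ⟨w₃, hw₁, hw₂⟩ := H.of_distant hac.symm (by omega) hcw₁
  refine ⟨c :: b :: w₃, ?_, ?_⟩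
  · calc c :: y ≋ c :: b :: w₂ := hy.cons c
      _ ≋ c :: b :: c :: w₃ := (hw₂.cons b).cons c
      _ ≋ b :: c :: b :: w₃ := braid hbc.symm w₃
  · calc c :: b :: w₁ ≋ c :: b :: a :: w₃ := (hw₁.cons b).cons c
      _ ≋ c :: a :: b :: w₃ := (swap hab.symm w₃).cons c
      _ ≋ a :: c :: b :: w₃ := swap hac.symm (b :: w₃)

lemma cube_of_adjacent_of_adjacent_of_distant (H : ComplementBelow N n) (hab : Adjacent a b)
    (hbc : Adjacent b c) (hac : Distant a c) (hlen : (complement c a ++ y).length ≤ n)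
    (h : complement c a ++ y ≋ complement c b ++ w₁) :
    ∃ w, complement a c ++ y ≋ complement a b ++ w ∧
      complement b c ++ w₁ ≋ complement b a ++ w := by
  simp only [complement_of_distant, complement_of_adjacent, hab, hab.symm, hac, hac.symm, hbc,
    hbc.symm, List.cons_append, List.nil_append, List.length_cons] at h hlen ⊢
  have hl₁ : y.length = w₁.length + 1 := by simpa using h.length_eq
  obtain ⟨w₂, hy, hcw₁⟩ := H.of_adjacent hab (by omega) h
  have hl₂ : y.length = w₂.length + 2 := by simpa using hy.length_eq
  obtain ⟨w₃, hw₁, hbw₂⟩ := H.of_distant hac.symm (by omega) hcw₁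
  obtain ⟨w₄, hw₂, hw₃⟩ := H.of_adjacent hbc (by omega) hbw₂
  refine ⟨c :: b :: a :: w₄, ?_, ?_⟩
  · calc c :: y ≋ c :: b :: a :: w₂ := hy.cons c
      _ ≋ c :: b :: a :: c :: b :: w₄ := ((hw₂.cons a).cons b).cons c
      _ ≋ c :: b :: c :: a :: b :: w₄ := ((swap hac (b :: w₄)).cons b).cons c
      _ ≋ b :: c :: b :: a :: b :: w₄ := braid hbc.symm (a :: b :: w₄)
      _ ≋ b :: c :: a :: b :: a :: w₄ := ((braid hab.symm w₄).cons c).cons b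
      _ ≋ b :: a :: c :: b :: a :: w₄ := (swap hac.symm (b :: a :: w₄)).cons b
  · calc c :: b :: w₁ ≋ c :: b :: a :: w₃ := (hw₁.cons b).cons c
      _ ≋ c :: b :: a :: b :: c :: w₄ := ((hw₃.cons a).cons b).cons c
      _ ≋ c :: a :: b :: a :: c :: w₄ := (braid hab.symm (c :: w₄)).cons c
      _ ≋ a :: c :: b :: a :: c :: w₄ := swap hac.symm (b :: a :: c :: w₄)
      _ ≋ a :: c :: b :: c :: a :: w₄ := (((swap hac w₄).cons b).cons c).cons a
      _ ≋ a :: b :: c :: b :: a :: w₄ := (braid hbc.symm (a :: w₄)).cons a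

lemma cube_of_distant_of_adjacent_of_adjacent (H : ComplementBelow N n) (hab : Distant a b)
    (hbc : Adjacent b c) (hac : Adjacent a c) (hlen : (complement c a ++ y).length ≤ n)
    (h : complement c a ++ y ≋ complement c b ++ w₁) :
    ∃ w, complement a c ++ y ≋ complement a b ++ w ∧
      complement b c ++ w₁ ≋ complement b a ++ w := by
  simp only [complement_of_distant, complement_of_adjacent, hab, hab.symm, hac, hac.symm, hbc,
    hbc.symm, List.cons_append, List.nil_append, List.length_cons] at h hlen ⊢
  have hl₁ : y.length = w₁.length := by simpa using h.length_eq
  obtain ⟨w₂, hcy, hcw₁⟩ := H.of_distant hab (by simp only [List.length_cons]; omega) h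
  obtain ⟨w₃, hy, hw₂⟩ := H.of_adjacent hbc.symm (by omega) hcy
  obtain ⟨w₄, hw₁, hw₂'⟩ := H.of_adjacent hac.symm (by omega) hcw₁
  have hl₃ : y.length = w₃.length + 2 := by simpa using hy.length_eq
  obtain ⟨w₅, hw₃, hw₄⟩ := H.of_distant hab.symm (by omega)
    (H.cancel (by simp only [List.length_cons]; omega) (hw₂.symm.trans hw₂'))
  refine ⟨c :: b :: a :: c :: w₅, ?_, ?_⟩
  · calc c :: a :: y ≋ c :: a :: b :: c :: w₃ := (hy.cons a).cons c
      _ ≋ c :: a :: b :: c :: a :: w₅ := (((hw₃.cons c).cons b).cons a).cons c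
      _ ≋ c :: b :: a :: c :: a :: w₅ := (swap hab (c :: a :: w₅)).cons c
      _ ≋ c :: b :: c :: a :: c :: w₅ := ((braid hac w₅).cons b).cons c
      _ ≋ b :: c :: b :: a :: c :: w₅ := braid hbc.symm (a :: c :: w₅)
  · calc c :: b :: w₁ ≋ c :: b :: a :: c :: w₄ := (hw₁.cons b).cons c
      _ ≋ c :: b :: a :: c :: b :: w₅ := (((hw₄.cons c).cons a).cons b).cons c
      _ ≋ c :: a :: b :: c :: b :: w₅ := (swap hab.symm (c :: b :: w₅)).cons c
      _ ≋ c :: a :: c :: b :: c :: w₅ := ((braid hbc w₅).cons a).cons c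
      _ ≋ a :: c :: a :: b :: c :: w₅ := braid hac.symm (b :: c :: w₅)
      _ ≋ a :: c :: b :: a :: c :: w₅ := ((swap hab (c :: w₅)).cons c).cons a

/-- The inductive step of Garside's lemma: `a :: complement a c ++ y` has been rewritten at the
front into `c :: complement c a ++ y`, and the lemma is already known for the latter. -/
lemma cube (H : ComplementBelow N n) (hac : a ≠ c) (hlen : (complement c a ++ y).length ≤ n)
    (h : complement c a ++ y ≋ complement c b ++ w₁) :
    ∃ w, complement a c ++ y ≋ complement a b ++ w ∧
      complement b c ++ w₁ ≋ complement b a ++ w := by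
  rcases eq_or_ne b c with rfl | hbc
  · exact ⟨y, .refl, by simpa using h.symm⟩
  rcases eq_or_ne a b with rfl | hab
  · refine ⟨complement a c ++ y, by rw [complement_self, List.nil_append], ?_⟩
    simpa using BraidEquiv.append .refl (H.cancel_append hlen h).symm
  -- the statement is symmetric under `a ↔ b`, `y ↔ w₁`
  have hlen' : (complement c b ++ w₁).length ≤ n := h.length_eq ▸ hlen
  rcases adjacent_or_distant hab with hab | hab <;>
    rcases adjacent_or_distant hac with hac | hac <;>
    rcases adjacent_or_distant hbc with hbc | hbc
  · exact absurd hac (not_adjacent_of_adjacent_of_adjacent hab hbc)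
  · exact (cube_of_adjacent_of_adjacent_of_distant H hab.symm hac hbc hlen' h.symm).imp
      fun _ => And.symm
  · exact cube_of_adjacent_of_adjacent_of_distant H hab hbc hac hlen h
  · exact cube_of_distant_of_distant H hac hbc hlen h
  · exact cube_of_distant_of_adjacent_of_adjacent H hab hbc hac hlen h
  · exact (cube_of_distant_of_adjacent_of_distant H hab.symm hac hbc hlen' h.symm).imp
      fun _ => And.symm
  · exact cube_of_distant_of_adjacent_of_distant H hab hbc hac hlen h
  · exact cube_of_distant_of_distant H hac hbc hlen h

end Cube

theorem complementBelow (n : ℕ) : ComplementBelow N n := by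
  induction n with
  | zero => exact fun _ _ _ _ hu => absurd hu (Nat.not_lt_zero _)
  | succ n H =>
    intro u v a b hu h
    suffices ∀ z, z ≋ b :: v → ∀ a u, z = a :: u → u.length ≤ n →
        ∃ w, u ≋ complement a b ++ w ∧ v ≋ complement b a ++ w from
      this _ h a u rfl (Nat.le_of_lt_succ hu)
    intro z hz
    induction hz using Relation.ReflTransGen.head_induction_on with
    | refl =>
      rintro a u hau -
      obtain ⟨rfl, rfl⟩ := List.cons.inj hau
      exact ⟨v, by simp [BraidEquiv.refl]⟩
    | head hs _ ih =>
      rintro a u rfl hu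
      rcases hs.cons_cases with ⟨u', rfl, hu'⟩ | ⟨c, y, hac, rfl, rfl⟩
      · obtain ⟨w, h₁, h₂⟩ := ih a u' rfl (hu'.length_eq ▸ hu)
        exact ⟨w, (Relation.ReflTransGen.single hu').trans h₁, h₂⟩
      · have hlen : (complement c a ++ y).length ≤ n := by
          simpa [length_complement_comm a c] using hu
        obtain ⟨w₁, h₁, h₂⟩ := ih c _ rfl hlen
        obtain ⟨w, h₃, h₄⟩ := cube H hac hlen h₁
        exact ⟨w, h₃, h₂.trans h₄⟩

theorem exists_complement_of_cons_braidEquiv {a b : Fin N} {u v : List (Fin N)}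
    (h : a :: u ≋ b :: v) : ∃ w, u ≋ complement a b ++ w ∧ v ≋ complement b a ++ w :=
  complementBelow _ u v a b (Nat.lt_succ_self _) h

local notation "B⁺[" N "]" => ArtinTitsMonoid (CoxeterMatrix.A N)

lemma coxeterMatrixA_apply (a b : Fin N) :
    CoxeterMatrix.A N a b = if a = b then 1 else if Adjacent a b then 3 else 2 := by
  simp [CoxeterMatrix.A, Adjacent, or_comm]

lemma altWordM_coxeterMatrixA (a b : Fin N) :
    altWordM a b (CoxeterMatrix.A N a b) = FreeMonoid.ofList (a :: complement a b) := by
  rw [coxeterMatrixA_apply, complement]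
  split_ifs <;> rfl

lemma braidEquiv_of_conGen {x y : FreeMonoid (Fin N)}
    (h : conGen (artinRelsM (CoxeterMatrix.A N)) x y) : x.toList ≋ y.toList := by
  induction h with
  | of x y h =>
    obtain ⟨a, b, -⟩ := h
    rw [altWordM_coxeterMatrixA, CoxeterMatrix.symmetric _ a b, altWordM_coxeterMatrixA]
    rcases eq_or_ne a b with rfl | hab
    · rfl
    · simpa using Relation.ReflTransGen.single (Step.rel [] [] hab)
  | refl => rfl
  | symm _ ih => exact ih.symm
  | trans _ _ ih₁ ih₂ => exact ih₁.trans ih₂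
  | mul _ _ ih₁ ih₂ => simpa using ih₁.append ih₂

lemma conGen_of_step {u v : List (Fin N)} (h : Step u v) :
    conGen (artinRelsM (CoxeterMatrix.A N)) (.ofList u) (.ofList v) := by
  obtain @⟨x, y, a, b, -⟩ := h
  have hne : CoxeterMatrix.A N a b ≠ 0 := by rw [coxeterMatrixA_apply]; split_ifs <;> decide
  have hrel := artinRelsM.braid a b hne
  rw [altWordM_coxeterMatrixA, CoxeterMatrix.symmetric _ a b, altWordM_coxeterMatrixA] at hrel
  simpa [mul_assoc] using
    (conGen _).mul ((conGen _).mul ((conGen _).refl (.ofList x)) (.of _ _ hrel))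
      ((conGen _).refl (.ofList y))

lemma conGen_iff_braidEquiv {u v : List (Fin N)} :
    conGen (artinRelsM (CoxeterMatrix.A N)) (.ofList u) (.ofList v) ↔ u ≋ v := by
  refine ⟨braidEquiv_of_conGen, fun h => ?_⟩
  induction h with
  | refl => exact (conGen _).refl _
  | tail _ hs ih => exact (conGen _).trans ih (conGen_of_step hs)

def mk (u : List (Fin N)) : B⁺[N] := PresentedMonoid.mk _ (.ofList u)

lemma mk_eq_mk_iff {u v : List (Fin N)} : mk u = mk v ↔ u ≋ v :=
  PresentedMonoid.mk_eq_mk_iff.trans conGen_iff_braidEquiv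

lemma mk_append (u v : List (Fin N)) : mk (u ++ v) = mk u * mk v := by
  simp [mk]

lemma exists_mk (x : B⁺[N]) : ∃ u, mk u = x := by
  induction x using PresentedMonoid.inductionOn with
  | h w => exact ⟨w.toList, rfl⟩

lemma eq_one_or_exists_eq_mk_mul (x : B⁺[N]) : x = 1 ∨ ∃ a x', x = mk [a] * x' := by
  obtain ⟨_ | ⟨a, u⟩, rfl⟩ := exists_mk x
  · exact .inl rfl
  · exact .inr ⟨a, mk u, mk_append [a] u⟩

def length (x : B⁺[N]) : ℕ :=
  Con.liftOn x FreeMonoid.length fun _ _ h => (braidEquiv_of_conGen h).length_eq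

@[simp] lemma length_mk (u : List (Fin N)) : length (mk u) = u.length := rfl

@[simp] lemma length_mul (x y : B⁺[N]) : length (x * y) = length x + length y := by
  obtain ⟨u, rfl⟩ := exists_mk x
  obtain ⟨v, rfl⟩ := exists_mk y
  simp [← mk_append]

lemma eq_one_of_length_eq_zero {x : B⁺[N]} (h : length x = 0) : x = 1 := by
  obtain ⟨u, rfl⟩ := exists_mk x
  rw [length_mk, List.length_eq_zero_iff] at h
  subst h
  rfl

lemma length_le_of_dvd {x y : B⁺[N]} (h : x ∣ y) : length x ≤ length y := by
  obtain ⟨c, rfl⟩ := h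
  simp

instance : IsLeftCancelMul B⁺[N] where
  mul_left_cancel x y z h := by
    obtain ⟨p, rfl⟩ := exists_mk x
    obtain ⟨u, rfl⟩ := exists_mk y
    obtain ⟨v, rfl⟩ := exists_mk z
    simp only [← mk_append, mk_eq_mk_iff] at h ⊢
    exact (complementBelow _).cancel_append le_rfl h

lemma mk_singleton_mul_complement (a b : Fin N) :
    mk [a] * mk (complement a b) = mk [b] * mk (complement b a) := by
  rw [← mk_append, ← mk_append, mk_eq_mk_iff]
  rcases eq_or_ne a b with rfl | hab
  · rfl
  · simpa using Relation.ReflTransGen.single (Step.rel [] [] hab)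

lemma exists_of_mk_singleton_mul_eq {a b : Fin N} {x y : B⁺[N]} (h : mk [a] * x = mk [b] * y) :
    ∃ t, x = mk (complement a b) * t ∧ y = mk (complement b a) * t := by
  obtain ⟨u, rfl⟩ := exists_mk x
  obtain ⟨v, rfl⟩ := exists_mk y
  rw [← mk_append, ← mk_append, mk_eq_mk_iff] at h
  obtain ⟨w, hu, hv⟩ := exists_complement_of_cons_braidEquiv h
  exact ⟨mk w, by rwa [← mk_append, mk_eq_mk_iff], by rwa [← mk_append, mk_eq_mk_iff]⟩

lemma isLCM_mk_singleton (a b : Fin N) :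
    IsLCM (mk [a]) (mk [b]) (mk [a] * mk (complement a b)) := by
  refine ⟨dvd_mul_right _ _, mk_singleton_mul_complement a b ▸ dvd_mul_right _ _, ?_⟩
  rintro z ⟨s, rfl⟩ ⟨t, hst⟩
  obtain ⟨w, rfl, -⟩ := exists_of_mk_singleton_mul_eq hst
  exact ⟨w, (mul_assoc _ _ _).symm⟩

lemma exists_isLCM_of_dvd_of_length_lt (k : ℕ) :
    ∀ {x y z : B⁺[N]}, length z < k → x ∣ z → y ∣ z → ∃ m, IsLCM x y m := by
  induction k with
  | zero => exact fun hz => absurd hz (Nat.not_lt_zero _)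
  | succ k IH =>
    intro x y z hz hx hy
    have extend : ∀ {a q y b}, IsLCM (mk [a]) y (mk [a] * b) → mk [a] * q ∣ z → y ∣ z →
        ∃ m, IsLCM (mk [a] * q) y m := by
      intro a q y b hp hq hy
      obtain ⟨z', rfl, hqz, hbz⟩ := hp.exists_eq_mul hq hy
      have hz' : length z' < k := by
        simp only [length_mul, length_mk, List.length_singleton] at hz
        omega
      obtain ⟨m, hm⟩ := IH hz' hqz hbz
      exact ⟨_, hp.mul hm⟩
    rcases eq_one_or_exists_eq_mk_mul x with rfl | ⟨a, x, rfl⟩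
    · exact ⟨y, isLCM_one_left y⟩
    obtain ⟨b, hb⟩ : ∃ b, IsLCM (mk [a]) y (mk [a] * b) := by
      rcases eq_one_or_exists_eq_mk_mul y with rfl | ⟨c, y, rfl⟩
      · exact ⟨1, by simpa using (isLCM_one_left (mk [a])).symm⟩
      obtain ⟨m, hm⟩ := extend (isLCM_mk_singleton c a) hy ((dvd_mul_right _ _).trans hx)
      obtain ⟨b, rfl⟩ := hm.2.1
      exact ⟨b, hm.symm⟩
    exact extend hb hx hy

lemma exists_isLCM_of_dvd {x y z : B⁺[N]} (hx : x ∣ z) (hy : y ∣ z) : ∃ m, IsLCM x y m :=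
  exists_isLCM_of_dvd_of_length_lt _ (Nat.lt_succ_self _) hx hy

lemma exists_greatest_common_dvd (a b : B⁺[N]) :
    ∃ m, m ∣ a ∧ m ∣ b ∧ ∀ c, c ∣ a → c ∣ b → c ∣ m := by
  set D := {c : B⁺[N] | c ∣ a ∧ c ∣ b}
  have hbdd : BddAbove (length '' D) :=
    ⟨length a, by rintro _ ⟨c, hc, rfl⟩; exact length_le_of_dvd hc.1⟩
  have hne : (length '' D).Nonempty := ⟨_, 1, ⟨one_dvd a, one_dvd b⟩, rfl⟩
  obtain ⟨m, ⟨hma, hmb⟩, hm⟩ := Nat.sSup_mem hne hbdd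
  refine ⟨m, hma, hmb, fun c hca hcb => ?_⟩
  obtain ⟨l, hcl, ⟨e, rfl⟩, hl⟩ := exists_isLCM_of_dvd hca hma
  have hlD : m * e ∈ D := ⟨hl a hca hma, hl b hcb hmb⟩
  have : length e = 0 := by
    have := le_csSup hbdd ⟨_, hlD, rfl⟩
    simp only [length_mul] at this
    omega
  simpa [eq_one_of_length_eq_zero this] using hcl

lemma dvd_antisymm {x y : B⁺[N]} (hxy : x ∣ y) (hyx : y ∣ x) : x = y := by
  obtain ⟨c, rfl⟩ := hxy
  obtain ⟨d, hd⟩ := hyx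
  have : length c = 0 := by
    have := congrArg length hd
    simp only [length_mul] at this
    omega
  simp [eq_one_of_length_eq_zero this]

end PositiveBraid

theorem statement11_general (n : ℕ) :
    (∀ a : BraidMonoid n, leftDvd a a) ∧
    (∀ a b c : BraidMonoid n, leftDvd a b → leftDvd b c → leftDvd a c) ∧
    (∀ a b : BraidMonoid n, leftDvd a b → leftDvd b a → a = b) ∧
    (∀ a b : BraidMonoid n, leftDvd a (braidDelta n) → leftDvd b (braidDelta n) →
      (∃ m, leftDvd m (braidDelta n) ∧ leftDvd m a ∧ leftDvd m b ∧
        ∀ c, leftDvd c (braidDelta n) → leftDvd c a → leftDvd c b → leftDvd c m) ∧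
      (∃ u, leftDvd u (braidDelta n) ∧ leftDvd a u ∧ leftDvd b u ∧
        ∀ c, leftDvd c (braidDelta n) → leftDvd a c → leftDvd b c → leftDvd u c)) := by
  simp only [leftDvd_iff_dvd]
  refine ⟨dvd_refl, fun _ _ _ => dvd_trans, fun _ _ => PositiveBraid.dvd_antisymm,
    fun a b ha hb => ⟨?_, ?_⟩⟩
  · obtain ⟨m, hma, hmb, hm⟩ := PositiveBraid.exists_greatest_common_dvd a b
    exact ⟨m, hma.trans ha, hma, hmb, fun c _ => hm c⟩
  · obtain ⟨m, ham, hbm, hm⟩ := PositiveBraid.exists_isLCM_of_dvd ha hb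
    exact ⟨m, hm _ ha hb, ham, hbm, fun c _ => hm c⟩

/-- In the positive braid monoid `Bₙ⁺`, left-divisibility is a partial order, and the
interval `[1, Δ]` of left-divisors of the half twist `Δ` is a lattice: any two of its
elements admit a greatest lower bound and a least upper bound within `[1, Δ]`. -/
theorem statement11 (n : ℕ) (hn : 2 ≤ n) :
    (∀ a : BraidMonoid n, leftDvd a a) ∧
    (∀ a b c : BraidMonoid n, leftDvd a b → leftDvd b c → leftDvd a c) ∧
    (∀ a b : BraidMonoid n, leftDvd a b → leftDvd b a → a = b) ∧
    (∀ a b : BraidMonoid n, leftDvd a (braidDelta n) → leftDvd b (braidDelta n) →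
      (∃ m, leftDvd m (braidDelta n) ∧ leftDvd m a ∧ leftDvd m b ∧
        ∀ c, leftDvd c (braidDelta n) → leftDvd c a → leftDvd c b → leftDvd c m) ∧
      (∃ u, leftDvd u (braidDelta n) ∧ leftDvd a u ∧ leftDvd b u ∧
        ∀ c, leftDvd c (braidDelta n) → leftDvd a c → leftDvd b c → leftDvd u c)) :=
  statement11_general n
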